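/- Let X be a nonempty closed L-pseudo-Lipschitz subset of the pseudo-Euclidean space ℝ_{(l,p)} with L < 1. Then for every x ∈ ℝ^n \ M_X the set m(x) consists of a single point y, the function ρ(·,X) is differentiable at x, and its derivative is the linear map h ↦ 2⟪x − y, h⟫; equivalently ∇ρ(x) = 2A(x − m(x)), where A = diag(1,…,1,−1,…,−1) with l entries 1 and p entries −1. -/

import Mathlib

open Filter Topology Set

noncomputable section

/-- The pseudo-Euclidean space `ℝ_{(l,p)}`: `ℝ^(l+p)` with the Euclidean topology. -/
abbrev PE (l p : ℕ) := EuclideanSpace ℝ (Fin (l + p))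

/-- The quadratic form `Q(x) = ‖x‖_l² − ‖x‖_p²`. -/
def Q (l p : ℕ) (x : PE l p) : ℝ :=
  ∑ i : Fin (l + p), if (i : ℕ) < l then (x i) ^ 2 else -((x i) ^ 2)

/-- The pseudo-scalar product `⟪x,y⟫ = Σ_{i<l} x_i y_i − Σ_{i≥l} x_i y_i`. -/
def pseudoInner (l p : ℕ) (x y : PE l p) : ℝ :=
  ∑ i : Fin (l + p), if (i : ℕ) < l then x i * y i else -(x i * y i)

/-- `‖x‖_l`: the Euclidean norm of the first `l` coordinates. -/
def normL (l p : ℕ) (x : PE l p) : ℝ :=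
  Real.sqrt (∑ i : Fin (l + p), if (i : ℕ) < l then (x i) ^ 2 else 0)

/-- `‖x‖_p`: the Euclidean norm of the last `p` coordinates. -/
def normP (l p : ℕ) (x : PE l p) : ℝ :=
  Real.sqrt (∑ i : Fin (l + p), if (i : ℕ) < l then 0 else (x i) ^ 2)

/-- `X` is acausal: `Q(x−y) > 0` for all distinct `x, y ∈ X`. -/
def Acausal (l p : ℕ) (X : Set (PE l p)) : Prop :=
  ∀ x ∈ X, ∀ y ∈ X, x ≠ y → 0 < Q l p (x - y)

/-- `X` is `L`-pseudo-Lipschitz: `L‖x−y‖_l ≥ ‖x−y‖_p` for all `x, y ∈ X`. -/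
def PseudoLipschitz (l p : ℕ) (L : ℝ) (X : Set (PE l p)) : Prop :=
  ∀ x ∈ X, ∀ y ∈ X, normP l p (x - y) ≤ L * normL l p (x - y)

/-- The squared-distance function `ρ(a,X) = inf {Q(x−a) : x ∈ X}`. -/
def rho (l p : ℕ) (X : Set (PE l p)) (a : PE l p) : ℝ :=
  sInf ((fun x => Q l p (x - a)) '' X)

/-- The set of closest points `m(a) = {x ∈ X : Q(x−a) = ρ(a,X)}`, via its equivalent
description `m(a) = {x ∈ X : ∀ b ∈ X, Q(x−a) ≤ Q(b−a)}`. -/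
def mm (l p : ℕ) (X : Set (PE l p)) (a : PE l p) : Set (PE l p) :=
  {x ∈ X | ∀ b ∈ X, Q l p (x - a) ≤ Q l p (b - a)}

/-- The medial axis `M_X`: points with at least two closest points in `X`. -/
def medialAxis (l p : ℕ) (X : Set (PE l p)) : Set (PE l p) :=
  {a | (mm l p X a).Nontrivial}

/-- The vacant axis `W_X`: points with no closest point in `X`. -/
def vacantAxis (l p : ℕ) (X : Set (PE l p)) : Set (PE l p) :=
  {a | mm l p X a = ∅}

/-- The normal set `N(a) = {x : a ∈ m(x)}`. -/
def NN (l p : ℕ) (X : Set (PE l p)) (a : PE l p) : Set (PE l p) :=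
  {x | a ∈ mm l p X x}

/-- The strict normal set `N'(a) = {x : m(x) = {a}}`. -/
def NN' (l p : ℕ) (X : Set (PE l p)) (a : PE l p) : Set (PE l p) :=
  {x | mm l p X x = {a}}

/-- The linear map `A = diag(1,…,1,−1,…,−1)` (with `l` entries `1` and `p` entries `−1`). -/
def Amap (l p : ℕ) (x : PE l p) : PE l p :=
  (WithLp.equiv 2 (Fin (l + p) → ℝ)).symm (fun i => if (i : ℕ) < l then x i else -(x i))

/-!
For `L < 1` the pseudo-Lipschitz bound makes `Q` coercive on `X`: `c‖x - y‖² ≤ Q(x - y)` for some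
`c > 0`. Sublevel sets of `Q(· - a)` on `X` are therefore bounded, so closest points exist, and by
compactness any selection `π` of closest points is continuous at a point `x` with a unique closest
point `y`. Expanding `Q` around `x` squeezes `ρ(a) - ρ(x) - 2⟪x - y, a - x⟫` between
`Q(a - x) - 2⟪π a - y, a - x⟫` and `Q(a - x)`, which is `o(‖a - x‖)` since `π a → y`.
-/

variable {l p : ℕ}

lemma Amap_apply (x : PE l p) (i : Fin (l + p)) :
    Amap l p x i = if (i : ℕ) < l then x i else -(x i) := rfl

lemma inner_Amap (u v : PE l p) : inner ℝ (Amap l p u) v = pseudoInner l p u v := by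
  simp only [PiLp.inner_apply, Amap_apply, pseudoInner, RCLike.inner_apply, conj_trivial]
  refine Finset.sum_congr rfl fun i _ => ?_
  split_ifs <;> ring

lemma norm_Amap (u : PE l p) : ‖Amap l p u‖ = ‖u‖ := by
  simp only [EuclideanSpace.norm_eq, Amap_apply]
  congr 1
  refine Finset.sum_congr rfl fun i _ => ?_
  split_ifs <;> simp

lemma abs_pseudoInner_le (u v : PE l p) : |pseudoInner l p u v| ≤ ‖u‖ * ‖v‖ := by
  rw [← inner_Amap, ← norm_Amap u]
  exact abs_real_inner_le_norm _ _

lemma pseudoInner_self (u : PE l p) : pseudoInner l p u u = Q l p u := by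
  simp only [pseudoInner, Q, sq]

lemma abs_Q_le (u : PE l p) : |Q l p u| ≤ ‖u‖ ^ 2 := by
  rw [← pseudoInner_self, sq]
  exact abs_pseudoInner_le u u

lemma pseudoInner_sub_left (u v w : PE l p) :
    pseudoInner l p (u - v) w = pseudoInner l p u w - pseudoInner l p v w := by
  simp only [pseudoInner, PiLp.sub_apply, ← Finset.sum_sub_distrib]
  refine Finset.sum_congr rfl fun i _ => ?_
  split_ifs <;> ring

lemma pseudoInner_comm (u v : PE l p) : pseudoInner l p u v = pseudoInner l p v u := by
  simp only [pseudoInner, mul_comm]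

lemma Q_add (u v : PE l p) : Q l p (u + v) = Q l p u + 2 * pseudoInner l p u v + Q l p v := by
  simp only [Q, pseudoInner, PiLp.add_apply, Finset.mul_sum, ← Finset.sum_add_distrib]
  refine Finset.sum_congr rfl fun i _ => ?_
  split_ifs <;> ring

lemma Q_sub_comm (u v : PE l p) : Q l p (u - v) = Q l p (v - u) := by
  simp only [Q, PiLp.sub_apply]
  refine Finset.sum_congr rfl fun i _ => ?_
  split_ifs <;> ring

lemma continuous_Q : Continuous (Q l p) := by
  unfold Q
  refine continuous_finsetSum _ fun i _ => ?_
  split_ifs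
  · exact (PiLp.continuous_apply 2 _ i).pow 2
  · exact ((PiLp.continuous_apply 2 _ i).pow 2).neg

lemma normL_sq (u : PE l p) :
    normL l p u ^ 2 = ∑ i : Fin (l + p), if (i : ℕ) < l then (u i) ^ 2 else 0 :=
  Real.sq_sqrt <| Finset.sum_nonneg fun i _ => by split_ifs <;> positivity

lemma normP_sq (u : PE l p) :
    normP l p u ^ 2 = ∑ i : Fin (l + p), if (i : ℕ) < l then 0 else (u i) ^ 2 :=
  Real.sq_sqrt <| Finset.sum_nonneg fun i _ => by split_ifs <;> positivity

lemma Q_eq_normL_sq_sub_normP_sq (u : PE l p) : Q l p u = normL l p u ^ 2 - normP l p u ^ 2 := by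
  simp only [Q, normL_sq, normP_sq, ← Finset.sum_sub_distrib]
  refine Finset.sum_congr rfl fun i _ => ?_
  split_ifs <;> ring

lemma norm_sq_eq_normL_sq_add_normP_sq (u : PE l p) :
    ‖u‖ ^ 2 = normL l p u ^ 2 + normP l p u ^ 2 := by
  simp only [EuclideanSpace.norm_sq_eq, Real.norm_eq_abs, sq_abs, normL_sq, normP_sq,
    ← Finset.sum_add_distrib]
  refine Finset.sum_congr rfl fun i _ => ?_
  split_ifs <;> ring

def QCoercive (l p : ℕ) (c : ℝ) (X : Set (PE l p)) : Prop :=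
  ∀ x ∈ X, ∀ y ∈ X, c * ‖x - y‖ ^ 2 ≤ Q l p (x - y)

lemma PseudoLipschitz.exists_qCoercive {L : ℝ} {X : Set (PE l p)} (hlip : PseudoLipschitz l p L X)
    (hL : L < 1) : ∃ c > 0, QCoercive l p c X := by
  set M := max L 0
  have hM0 : 0 ≤ M := le_max_right _ _
  have hM1 : M < 1 := max_lt hL one_pos
  refine ⟨(1 - M ^ 2) / (1 + M ^ 2), div_pos (by nlinarith) (by positivity), fun x hx y hy => ?_⟩
  have hP : normP l p (x - y) ≤ M * normL l p (x - y) :=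
    (hlip x hx y hy).trans <| mul_le_mul_of_nonneg_right (le_max_left _ _) (Real.sqrt_nonneg _)
  have hP2 : normP l p (x - y) ^ 2 ≤ M ^ 2 * normL l p (x - y) ^ 2 := by
    rw [← mul_pow]; exact pow_le_pow_left₀ (Real.sqrt_nonneg _) hP 2
  rw [Q_eq_normL_sq_sub_normP_sq, norm_sq_eq_normL_sq_add_normP_sq, div_mul_eq_mul_div,
    div_le_iff₀ (by positivity)]
  nlinarith

lemma QCoercive.mul_norm_sub_le {c : ℝ} {X : Set (PE l p)} (hco : QCoercive l p c X)
    {x₀ b : PE l p} (hx₀ : x₀ ∈ X) (hb : b ∈ X) {a : PE l p}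
    (hQ : Q l p (b - a) ≤ Q l p (x₀ - a)) : c * ‖b - x₀‖ ≤ 2 * ‖x₀ - a‖ := by
  have hsplit := Q_add (b - x₀) (x₀ - a)
  rw [sub_add_sub_cancel] at hsplit
  have hcross := abs_le.mp (abs_pseudoInner_le (b - x₀) (x₀ - a))
  have hsq : c * ‖b - x₀‖ * ‖b - x₀‖ ≤ 2 * ‖x₀ - a‖ * ‖b - x₀‖ := by
    nlinarith [hco b hb x₀ hx₀]
  rcases (norm_nonneg (b - x₀)).eq_or_lt with h | h
  · rw [← h, mul_zero]; positivity
  · exact le_of_mul_le_mul_right hsq h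

lemma QCoercive.mm_nonempty {c : ℝ} {X : Set (PE l p)} (hco : QCoercive l p c X) (hc : 0 < c)
    (hne : X.Nonempty) (hX : IsClosed X) (a : PE l p) : (mm l p X a).Nonempty := by
  obtain ⟨x₀, hx₀⟩ := hne
  set K := X ∩ Metric.closedBall x₀ (2 * ‖x₀ - a‖ / c)
  have hK : IsCompact K := Metric.isCompact_of_isClosed_isBounded
    (hX.inter Metric.isClosed_closedBall) (Metric.isBounded_closedBall.subset inter_subset_right)
  have hx₀K : x₀ ∈ K := ⟨hx₀, Metric.mem_closedBall_self (by positivity)⟩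
  obtain ⟨z, hzK, hz⟩ := hK.exists_isMinOn ⟨x₀, hx₀K⟩
    (continuous_Q.comp (continuous_id.sub continuous_const)).continuousOn
  refine ⟨z, hzK.1, fun b hb => ?_⟩
  rcases le_or_gt (Q l p (b - a)) (Q l p (x₀ - a)) with h | h
  · refine hz ⟨hb, ?_⟩
    rw [Metric.mem_closedBall, dist_eq_norm, le_div_iff₀ hc, mul_comm]
    exact hco.mul_norm_sub_le hx₀ hb h
  · exact (hz hx₀K).trans h.le

lemma rho_eq_of_mem_mm {X : Set (PE l p)} {a z : PE l p} (hz : z ∈ mm l p X a) :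
    rho l p X a = Q l p (z - a) := by
  obtain ⟨hzX, hmin⟩ := hz
  refine le_antisymm ?_ ?_
  · exact csInf_le ⟨Q l p (z - a), fun q ⟨b, hb, hq⟩ => hq ▸ hmin b hb⟩ ⟨z, hzX, rfl⟩
  · exact le_csInf ⟨Q l p (z - a), z, hzX, rfl⟩ fun q ⟨b, hb, hq⟩ => hq ▸ hmin b hb

lemma QCoercive.tendsto_of_mm_eq_singleton {c : ℝ} {X : Set (PE l p)} (hco : QCoercive l p c X)
    (hc : 0 < c) (hX : IsClosed X) {x y : PE l p} (hxy : mm l p X x = {y})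
    {π : PE l p → PE l p} (hπ : ∀ a, π a ∈ mm l p X a) : Tendsto π (𝓝 x) (𝓝 y) := by
  have hy : y ∈ mm l p X x := hxy ▸ mem_singleton y
  set K := X ∩ Metric.closedBall y (2 * (‖y - x‖ + 1) / c)
  have hK : IsCompact K := Metric.isCompact_of_isClosed_isBounded
    (hX.inter Metric.isClosed_closedBall) (Metric.isBounded_closedBall.subset inter_subset_right)
  refine hK.tendsto_nhds_of_unique_mapClusterPt ?_ fun z hzK hz => ?_
  · filter_upwards [Metric.ball_mem_nhds x one_pos] with a ha
    refine ⟨(hπ a).1, ?_⟩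
    rw [Metric.mem_closedBall, dist_eq_norm, le_div_iff₀ hc, mul_comm]
    refine (hco.mul_norm_sub_le hy.1 (hπ a).1 ((hπ a).2 y hy.1)).trans ?_
    rw [mem_ball_iff_norm'] at ha
    linarith [norm_sub_le_norm_sub_add_norm_sub y x a]
  · obtain ⟨U, hUx, hUz⟩ := mapClusterPt_iff_ultrafilter.mp hz
    suffices z ∈ mm l p X x by rwa [hxy] at this
    refine ⟨hzK.1, fun w hw => ?_⟩
    have hlhs : Tendsto (fun a => Q l p (π a - a)) U (𝓝 (Q l p (z - x))) :=
      (continuous_Q.tendsto _).comp (hUz.sub hUx)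
    have hrhs : Tendsto (fun a => Q l p (w - a)) U (𝓝 (Q l p (w - x))) :=
      (continuous_Q.tendsto _).comp (tendsto_const_nhds.sub hUx)
    exact le_of_tendsto_of_tendsto' hlhs hrhs fun a => (hπ a).2 w hw

lemma abs_rho_sub_rho_sub_pseudoInner_le {X : Set (PE l p)} {x y a b : PE l p}
    (hy : y ∈ mm l p X x) (hb : b ∈ mm l p X a) :
    |rho l p X a - rho l p X x - 2 * pseudoInner l p (x - y) (a - x)| ≤
      (‖a - x‖ + 2 * ‖b - y‖) * ‖a - x‖ := by
  rw [rho_eq_of_mem_mm hy, rho_eq_of_mem_mm hb]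
  have hupper : Q l p (y - a) = Q l p (a - x) + 2 * pseudoInner l p (x - y) (a - x)
      + Q l p (y - x) := by
    rw [Q_sub_comm y, Q_sub_comm y, ← sub_add_sub_cancel a x y, Q_add, pseudoInner_comm]
  have hshift : pseudoInner l p (b - a) (a - x) = pseudoInner l p (b - y) (a - x)
      - Q l p (a - x) - pseudoInner l p (x - y) (a - x) := by
    rw [show b - a = (b - y) - (a - x) - (x - y) by abel, pseudoInner_sub_left,
      pseudoInner_sub_left, pseudoInner_self]
  have hlower : Q l p (b - x) = Q l p (b - a) - 2 * pseudoInner l p (x - y) (a - x)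
      + 2 * pseudoInner l p (b - y) (a - x) - Q l p (a - x) := by
    rw [← sub_add_sub_cancel b a x, Q_add, hshift]
    ring
  have hQ := abs_le.mp (abs_Q_le (a - x))
  have hcross := abs_le.mp (abs_pseudoInner_le (b - y) (a - x))
  rw [abs_le]
  constructor <;> nlinarith [hb.2 y hy.1, hy.2 b hb.1]

lemma hasGradientAt_rho {X : Set (PE l p)} {x y : PE l p} {π : PE l p → PE l p}
    (hπ : ∀ a, π a ∈ mm l p X a) (hy : y ∈ mm l p X x) (hlim : Tendsto π (𝓝 x) (𝓝 y)) :
    HasGradientAt (rho l p X) ((2 : ℝ) • Amap l p (x - y)) x := by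
  have hsmall : Tendsto (fun a => ‖a - x‖ + 2 * ‖π a - y‖) (𝓝 x) (𝓝 0) := by
    simpa using ((tendsto_id.sub_const x).norm.add ((hlim.sub_const y).norm.const_mul 2))
  rw [hasGradientAt_iff_isLittleO, Asymptotics.isLittleO_iff]
  intro C hC
  filter_upwards [hsmall.eventually (gt_mem_nhds hC)] with a ha
  rw [real_inner_smul_left, inner_Amap, Real.norm_eq_abs]
  exact (abs_rho_sub_rho_sub_pseudoInner_le hy (hπ a)).trans
    (mul_le_mul_of_nonneg_right ha.le (norm_nonneg _))

theorem rho_differentiable_off_medialAxis_general (l p : ℕ) (L : ℝ) (hL : L < 1)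
    (X : Set (PE l p)) (hne : X.Nonempty) (hX : IsClosed X)
    (hlip : PseudoLipschitz l p L X) :
    ∀ x ∉ medialAxis l p X, ∃ y : PE l p, mm l p X x = {y} ∧
      HasGradientAt (rho l p X) ((2 : ℝ) • Amap l p (x - y)) x ∧
      ∀ h : PE l p, inner ℝ ((2 : ℝ) • Amap l p (x - y)) h = 2 * pseudoInner l p (x - y) h := by
  intro x hx
  obtain ⟨c, hc, hco⟩ := hlip.exists_qCoercive hL
  choose π hπ using hco.mm_nonempty hc hne hX
  have hxy : mm l p X x = {π x} := (not_nontrivial_iff.mp hx).eq_singleton_of_mem (hπ x)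
  refine ⟨π x, hxy, hasGradientAt_rho hπ (hπ x) (hco.tendsto_of_mm_eq_singleton hc hX hxy hπ),
    fun h => ?_⟩
  rw [real_inner_smul_left, inner_Amap]

/-- For nonempty closed `L`-pseudo-Lipschitz `X` with `L < 1` and any
`x ∉ M_X`: `m(x)` is a single point `y`, `ρ(·,X)` is differentiable at `x`, and its derivative
is `h ↦ 2⟪x−y,h⟫`, i.e. its (Euclidean) gradient is `∇ρ(x) = 2A(x−y)`. -/
theorem rho_differentiable_off_medialAxis (l p : ℕ) (hl : 1 ≤ l) (L : ℝ) (hL : L < 1)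
    (X : Set (PE l p)) (hne : X.Nonempty) (hX : IsClosed X)
    (hlip : PseudoLipschitz l p L X) :
    ∀ x ∉ medialAxis l p X, ∃ y : PE l p, mm l p X x = {y} ∧
      HasGradientAt (rho l p X) ((2 : ℝ) • Amap l p (x - y)) x ∧
      ∀ h : PE l p, inner ℝ ((2 : ℝ) • Amap l p (x - y)) h = 2 * pseudoInner l p (x - y) h :=
  rho_differentiable_off_medialAxis_general l p L hL X hne hX hlip
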